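/- When r ≡ +∞ and ℓ is càdlàg real-valued, the explicit formula for the ESM reduces to the one-sided Skorokhod map: Γ_ℓ(ψ)(t) = ψ(t) + sup_{s∈[0,t]} (ℓ(s) − ψ(s))⁺, i.e., ψ − Ξ_{ℓ,∞}(ψ) = Γ_ℓ(ψ). -/

import Mathlib

/-!
With `r ≡ +∞` every term `ψ(s) - r(s)` is `-∞`, so `Ξ_{ℓ,∞}(ψ)(t)` collapses to
`min 0 (inf_{[0,t]} (ψ - ℓ))`, and `ψ(t) - min 0 (inf (ψ - ℓ)) = ψ(t) + sup (ℓ - ψ)⁺` because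
`x ↦ x⁺` is monotone and continuous. The infimum is finite, not `⊥`, since a càdlàg function is
bounded below on `[0, t]`: near each point it is controlled by its one-sided limits, and
compactness patches these local bounds together.
-/

open Set Filter

/-- A càdlàg real-valued function on `[0, ∞)`. -/
def Cadlag (f : ℝ → ℝ) : Prop :=
  ∀ t : ℝ, 0 ≤ t → ContinuousWithinAt f (Set.Ici t) t ∧
    (0 < t → ∃ l : ℝ, Filter.Tendsto f (nhdsWithin t (Set.Iio t)) (nhds l))

/-- The functional `Ξ_{ℓ,r}(ψ)` computed in the extended reals, with upper boundary
`r ≡ +∞`, so that each term `ψ(s) - r(s)` is interpreted as `-∞`. -/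
noncomputable def XiTop (l ψ : ℝ → ℝ) (t : ℝ) : EReal :=
  max (min (max ((ψ 0 : EReal) - ⊤) 0)
        (⨅ u ∈ Set.Icc (0 : ℝ) t, ((ψ u - l u : ℝ) : EReal)))
      (⨆ s ∈ Set.Icc (0 : ℝ) t,
        min ((ψ s : EReal) - ⊤) (⨅ u ∈ Set.Icc s t, ((ψ u - l u : ℝ) : EReal)))

open Topology

lemma IsCompact.bddBelow_image_of_isBoundedUnder {X α : Type*} [TopologicalSpace X] [LinearOrder α]
    [Nonempty α] {K : Set X} {f : X → α} (hK : IsCompact K)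
    (hf : ∀ x ∈ K, IsBoundedUnder (· ≥ ·) (𝓝[K] x) f) : BddBelow (f '' K) := by
  refine hK.induction_on (p := fun S => BddBelow (f '' S)) (by simp)
    (fun _ _ hst ht => ht.mono (image_mono hst))
    (fun s t hs ht => image_union f s t ▸ hs.union ht) fun x hx => ?_
  obtain ⟨b, hb⟩ := hf x hx
  exact ⟨{y | b ≤ f y}, hb, b, by rintro _ ⟨y, hy, rfl⟩; exact hy⟩

lemma Cadlag.sub {f g : ℝ → ℝ} (hf : Cadlag f) (hg : Cadlag g) : Cadlag (f - g) := by
  intro t ht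
  refine ⟨(hf t ht).1.sub (hg t ht).1, fun htpos => ?_⟩
  obtain ⟨a, ha⟩ := (hf t ht).2 htpos
  obtain ⟨b, hb⟩ := (hg t ht).2 htpos
  exact ⟨a - b, ha.sub hb⟩

lemma Cadlag.isBoundedUnder_ge {f : ℝ → ℝ} (hf : Cadlag f) {x : ℝ} (hx : 0 ≤ x) :
    IsBoundedUnder (· ≥ ·) (𝓝[Ici 0] x) f := by
  obtain ⟨b, hb⟩ := (hf x hx).1.isBoundedUnder_ge
  rcases hx.eq_or_lt with rfl | hx
  · exact ⟨b, hb⟩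
  obtain ⟨L, hL⟩ := (hf x hx.le).2 hx
  obtain ⟨a, ha⟩ := hL.isBoundedUnder_ge
  have : ∀ᶠ y in 𝓝 x, min a b ≤ f y := by
    rw [← nhdsLT_sup_nhdsGE, eventually_sup]
    exact ⟨ha.mono fun y hy => min_le_of_left_le hy, hb.mono fun y hy => min_le_of_right_le hy⟩
  exact ⟨min a b, nhdsWithin_le_nhds this⟩

lemma Cadlag.bddBelow_image_Icc {f : ℝ → ℝ} (hf : Cadlag f) (t : ℝ) : BddBelow (f '' Icc 0 t) :=
  isCompact_Icc.bddBelow_image_of_isBoundedUnder fun _ hx =>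
    (hf.isBoundedUnder_ge hx.1).mono (nhdsWithin_mono _ Icc_subset_Ici_self)

lemma EReal.coe_csInf_image {β : Type*} {f : β → ℝ} {K : Set β} (hK : K.Nonempty)
    (hf : BddBelow (f '' K)) : ((sInf (f '' K) : ℝ) : EReal) = ⨅ u ∈ K, (f u : EReal) := by
  rw [EReal.coe_strictMono.monotone.map_csInf_of_continuousAt
    continuous_coe_real_ereal.continuousAt (hK.image f) hf, sInf_image, iInf_image]

lemma Real.sSup_image_max_neg_zero {β : Type*} {f : β → ℝ} {K : Set β} (hK : K.Nonempty)
    (hf : BddBelow (f '' K)) :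
    sSup ((fun s => max (-f s) 0) '' K) = -min 0 (sInf (f '' K)) := by
  have hmono : Monotone fun x : ℝ => max x 0 := fun _ _ h => max_le_max_right 0 h
  have hcont : Continuous fun x : ℝ => max x 0 := continuous_id.max continuous_const
  rw [show (fun s => max (-f s) 0) '' K = (fun x => max x 0) '' (-(f '' K)) by
      rw [← image_neg_eq_neg, image_image, image_image],
    ← hmono.map_csSup_of_continuousAt hcont.continuousAt (hK.image f).neg hf.neg, Real.sSup_neg,
    neg_inf, neg_zero, max_comm]

lemma XiTop_eq (l ψ : ℝ → ℝ) (t : ℝ) :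
    XiTop l ψ t = min 0 (⨅ u ∈ Icc 0 t, ((ψ u - l u : ℝ) : EReal)) := by
  simp [XiTop, EReal.sub_top]

/-- When `r ≡ +∞`, the explicit formula for the extended Skorokhod map reduces to the
one-sided Skorokhod map: `ψ(t) - Ξ_{ℓ,∞}(ψ)(t) = ψ(t) + sup_{s∈[0,t]} (ℓ(s) - ψ(s))⁺`. -/
theorem esm_top_is_one_sided (l ψ : ℝ → ℝ) (hl : Cadlag l) (hψ : Cadlag ψ) :
    ∀ t : ℝ, 0 ≤ t →
      (ψ t : EReal) - XiTop l ψ t =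
        ((ψ t + sSup ((fun s => max (l s - ψ s) 0) '' Set.Icc 0 t) : ℝ) : EReal) := by
  intro t ht
  have hK : (Icc (0 : ℝ) t).Nonempty := nonempty_Icc.2 ht
  have hbdd : BddBelow ((fun u => ψ u - l u) '' Icc 0 t) := (hψ.sub hl).bddBelow_image_Icc t
  have hsup := Real.sSup_image_max_neg_zero hK hbdd
  simp only [neg_sub] at hsup
  calc (ψ t : EReal) - XiTop l ψ t
      = ((ψ t - min 0 (sInf ((fun u => ψ u - l u) '' Icc 0 t)) : ℝ) : EReal) := by
        rw [XiTop_eq, ← EReal.coe_csInf_image hK hbdd, ← EReal.coe_zero,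
          ← EReal.coe_strictMono.monotone.map_min, EReal.coe_sub]
    _ = ((ψ t + sSup ((fun s => max (l s - ψ s) 0) '' Icc 0 t) : ℝ) : EReal) := by
        rw [hsup, sub_eq_add_neg]
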